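/- arXiv:1210.3240 — 3 statements merged into one kernel-verified Lean document; each statement's English description precedes it below -/
import Mathlib

section
/- Let ν be a probability measure on S = [0,∞) × E (E ⊂ (0,∞) compact) of the form ν(dx,dv) = ν(x,dv) dx that is invariant for the transition kernel P_B((x,v),(dx',dv')) = (B(2x')/(v x')) 1_{x' ≥ x/2} exp(-∫_{x/2}^{x'} B(2s)/(v s) ds) ρ(v,dv') dx', where B is continuous, B(0)=0 and ∫^∞ B(2s)/s ds = ∞. Then for Lebesgue-a.e. y > 0, the marginal density ν(y) = ∫_E ν(y,dv) satisfies ν(y) = (B(2y)/y) · E_ν[ (1/τ₀) 1_{ξ₀ ≤ 2y, ξ₁ ≥ y} ], where (ξ₀,τ₀) ∼ ν and ξ₁ is the offspring size at birth given parent (ξ₀,τ₀) under P_B. -/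
/-!
Testing the invariance equation against functions of the size alone shows that the size marginal
of `ν` has density `y ↦ E_ν[offspringDens B ξ₀ τ₀ y]`, because `ρ` only acts on the growth rate.
For a single parent the offspring density at `y` is a hazard rate times a survival probability,
`(B(2y)/(τ₀ y)) · exp(-Λ(y))` with `Λ(y) = ∫_{ξ₀/2}^y B(2s)/(τ₀ s) ds`; since `Λ` diverges at
infinity, `exp(-Λ(y))` is exactly `P(ξ₁ ≥ y) = ∫_y^∞ offspringDens`. Averaging over `ν` gives the
formula.
-/

open MeasureTheory Set
open scoped ENNReal

/-- Density of the offspring's size at birth `x'` given the parent's size at birth `x`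
and growth rate `v`, for the division rate `B`. -/
noncomputable def offspringDens (B : ℝ → ℝ) (x v x' : ℝ) : ℝ :=
  if x / 2 ≤ x' then
    B (2 * x') / (v * x') *
      Real.exp (-(∫ s in Set.Ioc (x / 2) x', B (2 * s) / (v * s)))
  else 0

open Filter Topology

section Hazard

variable {h : ℝ → ℝ} {a : ℝ}

theorem tendsto_setIntegral_Ioc_atTop_of_lintegral_eq_top (hcont : ContinuousOn h (Ici a))
    (hnn : ∀ t ∈ Ioi a, 0 ≤ h t) (htop : ∫⁻ s in Ioi a, ENNReal.ofReal (h s) = ∞) :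
    Tendsto (fun t => ∫ s in Ioc a t, h s) atTop atTop := by
  rw [← ENNReal.tendsto_ofReal_nhds_top, ← htop]
  have hcover : AECover (volume.restrict (Ioi a)) atTop Iic := aecover_Iic tendsto_id
  refine (hcover.lintegral_tendsto_of_countably_generated
    ((hcont.mono Ioi_subset_Ici_self).aemeasurable measurableSet_Ioi).ennreal_ofReal).congr
    fun t => ?_
  rw [Measure.restrict_restrict measurableSet_Iic, Iic_inter_Ioi,
    ofReal_integral_eq_lintegral_ofReal]
  · exact (hcont.mono Icc_subset_Ici_self).integrableOn_Icc.mono_set Ioc_subset_Icc_self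
  · exact (ae_restrict_mem measurableSet_Ioc).mono fun s hs => hnn s hs.1

theorem integral_Ioi_mul_exp_neg_setIntegral_Ioc (hcont : ContinuousOn h (Ici a))
    (hnn : ∀ t ∈ Ioi a, 0 ≤ h t) (hdiv : Tendsto (fun t => ∫ s in Ioc a t, h s) atTop atTop)
    {y : ℝ} (hy : a ≤ y) :
    ∫ t in Ioi y, h t * Real.exp (-∫ s in Ioc a t, h s) = Real.exp (-∫ s in Ioc a y, h s) := by
  set Φ : ℝ → ℝ := fun t => ∫ s in Ioc a t, h s
  have hΦcont : ContinuousWithinAt Φ (Ici y) y :=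
    (intervalIntegral.continuousOn_primitive (hcont.mono Icc_subset_Ici_self).integrableOn_Icc y
      ⟨hy, (lt_add_one y).le⟩).mono_of_mem_nhdsWithin (Icc_mem_nhdsGE_of_mem ⟨hy, lt_add_one y⟩)
  have hΦderiv : ∀ t ∈ Ioi y, HasDerivAt Φ (h t) t := by
    intro t ht
    have hat : a < t := hy.trans_lt ht
    have hnhds : Ici a ∈ 𝓝 t := Ici_mem_nhds hat
    refine (intervalIntegral.integral_hasDerivAt_right
      ((hcont.mono Icc_subset_Ici_self).intervalIntegrable_of_Icc hat.le)
      ((hcont.mono Ioi_subset_Ici_self).stronglyMeasurableAtFilter isOpen_Ioi t hat)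
      (hcont.continuousAt hnhds)).congr_of_eventuallyEq ?_
    filter_upwards [hnhds] with u hu
    exact (intervalIntegral.integral_of_le hu).symm
  have hlim : Tendsto (fun t => -Real.exp (-Φ t)) atTop (𝓝 0) := by
    simpa using (Real.tendsto_exp_atBot.comp (tendsto_neg_atTop_atBot.comp hdiv)).neg
  have hΨderiv : ∀ t ∈ Ioi y,
      HasDerivAt (fun t => -Real.exp (-Φ t)) (h t * Real.exp (-Φ t)) t := fun t ht =>
    ((hΦderiv t ht).neg.exp.neg).congr_deriv (by rw [Pi.neg_apply]; ring)
  simpa using integral_Ioi_of_hasDerivAt_of_nonneg hΦcont.neg.rexp.neg hΨderiv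
    (fun t ht => mul_nonneg (hnn t (hy.trans_lt ht)) (Real.exp_pos _).le) hlim

end Hazard

theorem measurable_setIntegral_Ioc {α : Type*} [MeasurableSpace α] {F : α × ℝ → ℝ}
    (hF : Measurable F) {l u : α → ℝ} (hl : Measurable l) (hu : Measurable u) :
    Measurable fun q => ∫ s in Ioc (l q) (u q), F (q, s) := by
  have hind : Measurable fun z : α × ℝ =>
      (Ioc (l z.1) (u z.1)).indicator (fun s => F (z.1, s)) z.2 := by
    simp only [indicator_apply, mem_Ioc]
    exact Measurable.ite ((measurableSet_lt (hl.comp measurable_fst) measurable_snd).inter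
      (measurableSet_le measurable_snd (hu.comp measurable_fst))) hF measurable_const
  simp_rw [← integral_indicator measurableSet_Ioc]
  exact hind.stronglyMeasurable.integral_prod_right'.measurable

theorem measurable_offspringDens {B : ℝ → ℝ} (hB : Measurable B) :
    Measurable fun q : (ℝ × ℝ) × ℝ => offspringDens B q.1.1 q.1.2 q.2 := by
  have hrate : Measurable fun z : ((ℝ × ℝ) × ℝ) × ℝ => B (2 * z.2) / (z.1.1.2 * z.2) :=
    (hB.comp (by fun_prop)).div (by fun_prop)
  refine Measurable.ite (measurableSet_le (by fun_prop) (by fun_prop))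
    (((hB.comp (by fun_prop)).div (by fun_prop)).mul ?_) measurable_const
  exact (measurable_setIntegral_Ioc hrate (by fun_prop) (by fun_prop)).neg.exp

/-- `(1/τ₀) · P(ξ₁ ≥ y)` for a parent `p = (ξ₀, τ₀)` with `ξ₀ ≤ 2y`, and `0` otherwise. -/
noncomputable def crossingWeight (B : ℝ → ℝ) (y : ℝ) (p : ℝ × ℝ) : ℝ :=
  if p.1 ≤ 2 * y then 1 / p.2 * ∫ x' in Ici y, offspringDens B p.1 p.2 x' else 0

theorem measurable_crossingWeight {B : ℝ → ℝ} (hB : Measurable B) (y : ℝ) :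
    Measurable (crossingWeight B y) :=
  Measurable.ite (measurableSet_le measurable_fst measurable_const)
    ((measurable_const.div measurable_snd).mul
      (measurable_offspringDens hB).stronglyMeasurable.integral_prod_right'.measurable)
    measurable_const

section OffspringDensity

variable {B : ℝ → ℝ} (hBc : Continuous B) (hBnn : ∀ x, 0 ≤ B x)
  (hdiv : ∀ x > 0, ∫⁻ s in Ioi (x / 2), ENNReal.ofReal (B (2 * s) / s) = ∞)
include hBc hBnn hdiv

theorem setIntegral_Ici_offspringDens {x v y : ℝ} (hx : 0 < x) (hv : 0 < v) (hxy : x / 2 ≤ y) :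
    ∫ x' in Ici y, offspringDens B x v x' =
      Real.exp (-∫ s in Ioc (x / 2) y, B (2 * s) / (v * s)) := by
  have hcont : ContinuousOn (fun s => B (2 * s) / (v * s)) (Ici (x / 2)) :=
    (hBc.comp (continuous_const_mul 2)).continuousOn.div (continuous_const_mul v).continuousOn
      fun s hs => (mul_pos hv ((half_pos hx).trans_le hs)).ne'
  have hnn : ∀ s ∈ Ioi (x / 2), 0 ≤ B (2 * s) / (v * s) := fun s hs =>
    div_nonneg (hBnn _) (mul_pos hv ((half_pos hx).trans hs)).le
  have htop : ∫⁻ s in Ioi (x / 2), ENNReal.ofReal (B (2 * s) / (v * s)) = ∞ := by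
    have hsplit : ∀ s, ENNReal.ofReal (B (2 * s) / (v * s)) =
        ENNReal.ofReal v⁻¹ * ENNReal.ofReal (B (2 * s) / s) := fun s => by
      rw [← ENNReal.ofReal_mul (inv_nonneg.mpr hv.le), mul_comm v, ← div_div, div_eq_inv_mul]
    simp_rw [hsplit]
    rw [lintegral_const_mul' _ _ ENNReal.ofReal_ne_top, hdiv x hx,
      ENNReal.mul_top (ENNReal.ofReal_pos.mpr (inv_pos.mpr hv)).ne']
  rw [integral_Ici_eq_integral_Ioi, ← integral_Ioi_mul_exp_neg_setIntegral_Ioc hcont hnn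
    (tendsto_setIntegral_Ioc_atTop_of_lintegral_eq_top hcont hnn htop) hxy]
  refine setIntegral_congr_fun measurableSet_Ioi fun t ht => ?_
  rw [offspringDens, if_pos (hxy.trans (le_of_lt ht))]

theorem crossingWeight_mem_Icc {x v : ℝ} (hx : 0 < x) (hv : 0 < v) (y : ℝ) :
    crossingWeight B y (x, v) ∈ Icc 0 (1 / v) := by
  rw [crossingWeight]
  split_ifs with hxy
  · rw [setIntegral_Ici_offspringDens hBc hBnn hdiv hx hv (by linarith)]
    have hhazard : 0 ≤ ∫ s in Ioc (x / 2) y, B (2 * s) / (v * s) :=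
      setIntegral_nonneg measurableSet_Ioc fun s hs =>
        div_nonneg (hBnn _) (mul_pos hv ((half_pos hx).trans hs.1)).le
    exact ⟨by positivity, mul_le_of_le_one_right (by positivity)
      (Real.exp_le_one_iff.mpr (neg_nonpos.mpr hhazard))⟩
  · exact ⟨le_rfl, by positivity⟩

theorem offspringDens_eq_mul_crossingWeight {x v y : ℝ} (hx : 0 < x) (hv : 0 < v) (hy : 0 < y) :
    offspringDens B x v y = B (2 * y) / y * crossingWeight B y (x, v) := by
  rw [crossingWeight]
  by_cases hxy : x ≤ 2 * y
  · rw [if_pos hxy, setIntegral_Ici_offspringDens hBc hBnn hdiv hx hv (by linarith),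
      offspringDens, if_pos (by linarith)]
    field_simp
  · rw [if_neg hxy, offspringDens, if_neg (by linarith), mul_zero]

end OffspringDensity

theorem map_fst_eq_withDensity_of_invariant {ν : Measure (ℝ × ℝ)} [SFinite ν]
    {ρ : ℝ → Measure ℝ} {d : ℝ × ℝ → ℝ → ℝ≥0∞} (hd : Measurable (Function.uncurry d))
    (hρ : ∀ᵐ p ∂ν, IsProbabilityMeasure (ρ p.2))
    (hinv : ∀ f : ℝ × ℝ → ℝ≥0∞, Measurable f →
      ∫⁻ p, f p ∂ν = ∫⁻ p, (∫⁻ x' in Ioi (0 : ℝ), (∫⁻ v', f (x', v') ∂(ρ p.2)) * d p x') ∂ν) :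
    ν.map Prod.fst = (volume.restrict (Ioi 0)).withDensity fun y => ∫⁻ p, d p y ∂ν := by
  ext s hs
  rw [Measure.map_apply measurable_fst hs, withDensity_apply _ hs,
    ← lintegral_lintegral_swap hd.aemeasurable, ← lintegral_indicator_one (measurable_fst hs),
    hinv _ (measurable_one.indicator (measurable_fst hs))]
  refine lintegral_congr_ae (hρ.mono fun p hp => ?_)
  have hconst : ∀ x', ∫⁻ v', (Prod.fst ⁻¹' s).indicator 1 (x', v') ∂(ρ p.2) = s.indicator 1 x' :=
    fun x' => by
      change ∫⁻ _, s.indicator 1 x' ∂(ρ p.2) = _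
      rw [lintegral_const, measure_univ, mul_one]
  simp only [hconst, ← indicator_mul_left, Pi.one_apply, one_mul]
  rw [lintegral_indicator hs]

theorem lintegral_ofReal_offspringDens_eq {B : ℝ → ℝ} (hBc : Continuous B) (hBnn : ∀ x, 0 ≤ B x)
    (hdiv : ∀ x > 0, ∫⁻ s in Ioi (x / 2), ENNReal.ofReal (B (2 * s) / s) = ∞)
    {E : Set ℝ} (hE : IsCompact E) (hEpos : E ⊆ Ioi 0) {ν : Measure (ℝ × ℝ)} [IsFiniteMeasure ν]
    (hν : ∀ᵐ p ∂ν, p ∈ Ioi 0 ×ˢ E) {y : ℝ} (hy : 0 < y) :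
    ∫⁻ p, ENNReal.ofReal (offspringDens B p.1 p.2 y) ∂ν =
      ENNReal.ofReal (B (2 * y) / y * ∫ p, crossingWeight B y p ∂ν) := by
  obtain ⟨C, hC⟩ := hE.exists_bound_of_continuousOn (f := fun v => 1 / v)
    (continuousOn_const.div continuousOn_id fun v hv => (hEpos hv).ne')
  have hw : ∀ᵐ p ∂ν, crossingWeight B y p ∈ Icc 0 (1 / p.2) :=
    hν.mono fun p hp => crossingWeight_mem_Icc hBc hBnn hdiv hp.1 (hEpos hp.2) y
  have hint : Integrable (crossingWeight B y) ν :=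
    (integrable_const C).mono' (measurable_crossingWeight hBc.measurable y).aestronglyMeasurable
      ((hw.and hν).mono fun p hp => by
        rw [Real.norm_of_nonneg hp.1.1]
        exact hp.1.2.trans ((le_abs_self _).trans (hC p.2 hp.2.2)))
  rw [← integral_const_mul, ofReal_integral_eq_lintegral_ofReal (hint.const_mul _)
    (hw.mono fun p hp => mul_nonneg (div_nonneg (hBnn _) hy.le) hp.1)]
  exact lintegral_congr_ae (hν.mono fun p hp => congrArg ENNReal.ofReal
    (offspringDens_eq_mul_crossingWeight hBc hBnn hdiv hp.1 (hEpos hp.2) hy))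

theorem invariant_marginal_representation_general
    (B : ℝ → ℝ) (hBc : Continuous B) (hBnn : ∀ x, 0 ≤ B x)
    (hdiv : ∀ x > 0, ∫⁻ s in Set.Ioi (x / 2), ENNReal.ofReal (B (2 * s) / s) = ⊤)
    (E : Set ℝ) (hE : IsCompact E) (hEpos : E ⊆ Set.Ioi 0)
    (ρ : ℝ → Measure ℝ) (hρ : ∀ v ∈ E, IsProbabilityMeasure (ρ v))
    (ν : Measure (ℝ × ℝ)) (hνp : IsProbabilityMeasure ν)
    (hsupp : ν ((Set.Ioi 0 ×ˢ E)ᶜ) = 0)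
    (νm : ℝ → ℝ) (hνm : Measurable νm) (hνmnn : ∀ y, 0 ≤ νm y)
    (hmarg : ν.map Prod.fst
        = (volume.restrict (Set.Ioi 0)).withDensity fun y => ENNReal.ofReal (νm y))
    (hinv : ∀ f : ℝ × ℝ → ℝ≥0∞, Measurable f →
      ∫⁻ p, f p ∂ν =
        ∫⁻ p, (∫⁻ x' in Set.Ioi (0 : ℝ),
          (∫⁻ v', f (x', v') ∂(ρ p.2)) * ENNReal.ofReal (offspringDens B p.1 p.2 x')) ∂ν) :
    ∀ᵐ y ∂(volume.restrict (Set.Ioi 0)),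
      νm y = (B (2 * y) / y) *
        ∫ p, (if p.1 ≤ 2 * y then
                (1 / p.2) * ∫ x' in Set.Ici y, offspringDens B p.1 p.2 x'
              else 0) ∂ν := by
  have hν : ∀ᵐ p ∂ν, p ∈ Ioi 0 ×ˢ E := mem_ae_iff.mpr hsupp
  have hdm : Measurable fun q : (ℝ × ℝ) × ℝ => ENNReal.ofReal (offspringDens B q.1.1 q.1.2 q.2) :=
    (measurable_offspringDens hBc.measurable).ennreal_ofReal
  have hdens : (fun y => ENNReal.ofReal (νm y)) =ᵐ[volume.restrict (Ioi 0)]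
      fun y => ∫⁻ p, ENNReal.ofReal (offspringDens B p.1 p.2 y) ∂ν :=
    (withDensity_eq_iff_of_sigmaFinite hνm.ennreal_ofReal.aemeasurable
      hdm.lintegral_prod_left'.aemeasurable).mp
      (hmarg.symm.trans (map_fst_eq_withDensity_of_invariant hdm
        (hν.mono fun p hp => hρ p.2 hp.2) hinv))
  filter_upwards [hdens, ae_restrict_mem measurableSet_Ioi] with y hνy hy0
  change _ = _ * ∫ p, crossingWeight B y p ∂ν
  have hw_nonneg : 0 ≤ ∫ p, crossingWeight B y p ∂ν := integral_nonneg_of_ae <|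
    hν.mono fun p hp => (crossingWeight_mem_Icc hBc hBnn hdiv hp.1 (hEpos hp.2) y).1
  rw [← ENNReal.ofReal_eq_ofReal_iff (hνmnn y)
    (mul_nonneg (div_nonneg (hBnn _) (le_of_lt hy0)) hw_nonneg), hνy,
    lintegral_ofReal_offspringDens_eq hBc hBnn hdiv hE hEpos hν hy0]

/-- Representation of the marginal density of the invariant measure:
`ν(y) = (B(2y)/y) · E_ν[(1/τ₀) 1_{ξ₀ ≤ 2y, ξ₁ ≥ y}]` for a.e. `y > 0`. -/
theorem invariant_marginal_representation
    (B : ℝ → ℝ) (hBc : Continuous B) (hBnn : ∀ x, 0 ≤ B x) (hB0 : B 0 = 0)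
    (hdiv : ∀ x > 0, ∫⁻ s in Set.Ioi (x / 2), ENNReal.ofReal (B (2 * s) / s) = ⊤)
    (E : Set ℝ) (hE : IsCompact E) (hEpos : E ⊆ Set.Ioi 0)
    (ρ : ℝ → Measure ℝ) (hρ : ∀ v ∈ E, IsProbabilityMeasure (ρ v))
    (hρE : ∀ v ∈ E, ρ v E = 1)
    (ν : Measure (ℝ × ℝ)) (hνp : IsProbabilityMeasure ν)
    (hsupp : ν ((Set.Ioi 0 ×ˢ E)ᶜ) = 0)
    (νm : ℝ → ℝ) (hνm : Measurable νm) (hνmnn : ∀ y, 0 ≤ νm y)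
    (hmarg : ν.map Prod.fst
        = (volume.restrict (Set.Ioi 0)).withDensity fun y => ENNReal.ofReal (νm y))
    (hinv : ∀ f : ℝ × ℝ → ℝ≥0∞, Measurable f →
      ∫⁻ p, f p ∂ν =
        ∫⁻ p, (∫⁻ x' in Set.Ioi (0 : ℝ),
          (∫⁻ v', f (x', v') ∂(ρ p.2)) * ENNReal.ofReal (offspringDens B p.1 p.2 x')) ∂ν) :
    ∀ᵐ y ∂(volume.restrict (Set.Ioi 0)),
      νm y = (B (2 * y) / y) *
        ∫ p, (if p.1 ≤ 2 * y then
                (1 / p.2) * ∫ x' in Set.Ici y, offspringDens B p.1 p.2 x'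
              else 0) ∂ν :=
  invariant_marginal_representation_general B hBc hBnn hdiv E hE hEpos ρ hρ ν hνp hsupp νm hνm hνmnn
    hmarg hinv
end

section
/- With notation as in the minorisation step, ∫_{r/2}^r φ_B(y) dy ≥ (e_min/e_max) exp(-L/e_min) (1 - exp(-ℓ/e_min)), where φ_B(y) = (B(2y)/(e_max y)) exp(-∫_0^y B(2s)/(e_min s) ds), ∫_0^{r/2} B(2x)/x dx ≤ L and ∫_{r/2}^r B(2x)/x dx ≥ ℓ. -/
/-!
Put `G y = ∫₀^y B(2s) / (e_min s) ds`. The integrand is `(e_min / e_max) G'(y) e^{-G(y)}`, so the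
integral over `(r/2, r]` is `(e_min / e_max) e^{-G(r/2)} (1 - e^{-(G(r) - G(r/2))})`, and the
hypotheses give `G(r/2) ≤ L / e_min` and `G(r) - G(r/2) ≥ ℓ / e_min`.
-/

open MeasureTheory Set Real

theorem integral_mul_exp_neg_add_primitive {g : ℝ → ℝ} {a b : ℝ} (hab : a ≤ b)
    (hg : ContinuousOn g (Icc a b)) (c : ℝ) :
    ∫ y in a..b, g y * exp (-(c + ∫ s in a..y, g s))
      = exp (-c) - exp (-(c + ∫ s in a..b, g s)) := by
  set G : ℝ → ℝ := fun y => ∫ s in a..y, g s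
  have hgi : IntegrableOn g (uIcc a b) := by rw [uIcc_of_le hab]; exact hg.integrableOn_Icc
  have hG : ContinuousOn G (Icc a b) := by
    simpa only [uIcc_of_le hab] using intervalIntegral.continuousOn_primitive_interval hgi
  have hG' : ∀ y ∈ Ioo a b, HasDerivAt G (g y) y := fun y hy =>
    intervalIntegral.integral_hasDerivAt_right
      (hgi.intervalIntegrable.mono_set
        (uIcc_subset_uIcc_left (by simp [uIcc_of_le hab, hy.1.le, hy.2.le])))
      ((hg.mono Ioo_subset_Icc_self).stronglyMeasurableAtFilter isOpen_Ioo y hy)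
      (hg.continuousAt (Icc_mem_nhds hy.1 hy.2))
  have hFTC := intervalIntegral.integral_eq_sub_of_hasDerivAt_of_le hab
    (f := fun y => -exp (-(c + G y))) (f' := fun y => g y * exp (-(c + G y)))
    (by fun_prop)
    (fun y hy => by convert (((hG' y hy).const_add c).fun_neg.exp).fun_neg using 1; ring)
    ((hg.mul (by fun_prop)).intervalIntegrable_of_Icc hab)
  simp only [G, intervalIntegral.integral_same, add_zero] at hFTC
  linarith

theorem exp_neg_mul_one_sub_exp_neg_le_setIntegral_mul_exp_neg {g : ℝ → ℝ} {x₀ a b : ℝ}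
    (hx₀ : x₀ ≤ a) (hab : a ≤ b) (hg : ContinuousOn g (Icc a b)) :
    exp (-∫ s in Ioc x₀ a, g s) * (1 - exp (-∫ s in Ioc a b, g s))
      ≤ ∫ y in Ioc a b, g y * exp (-∫ s in Ioc x₀ y, g s) := by
  by_cases hint : IntegrableOn g (Ioc x₀ a)
  · have hsplit : ∀ y ∈ Icc a b,
        ∫ s in Ioc x₀ y, g s = (∫ s in Ioc x₀ a, g s) + ∫ s in a..y, g s := fun y hy => by
      rw [← intervalIntegral.integral_of_le hx₀, ← intervalIntegral.integral_of_le (hx₀.trans hy.1)]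
      refine (intervalIntegral.integral_add_adjacent_intervals ?_ ?_).symm
      · exact (intervalIntegrable_iff_integrableOn_Ioc_of_le hx₀).mpr hint
      · exact (hg.mono (Icc_subset_Icc_right hy.2)).intervalIntegrable_of_Icc hy.1
    have hprimitive : ∫ y in Ioc a b, g y * exp (-∫ s in Ioc x₀ y, g s)
        = ∫ y in a..b, g y * exp (-((∫ s in Ioc x₀ a, g s) + ∫ s in a..y, g s)) := by
      rw [intervalIntegral.integral_of_le hab]
      exact setIntegral_congr_fun measurableSet_Ioc fun y hy => by
        rw [hsplit y (Ioc_subset_Icc_self hy)]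
    rw [hprimitive, integral_mul_exp_neg_add_primitive hab hg,
      ← intervalIntegral.integral_of_le hab, neg_add, exp_add]
    exact le_of_eq (by ring)
  · -- The inner integrals all take the junk value `0`, and `1 - e^{-Δ} ≤ Δ` finishes.
    have hzero : ∀ y ∈ Ioc a b, ∫ s in Ioc x₀ y, g s = 0 := fun y hy =>
      integral_undef fun h => hint (IntegrableOn.mono_set h (Ioc_subset_Ioc_right hy.1.le))
    have hconst : ∫ y in Ioc a b, g y * exp (-∫ s in Ioc x₀ y, g s) = ∫ y in Ioc a b, g y :=
      setIntegral_congr_fun measurableSet_Ioc fun y hy => by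
        rw [hzero y hy, neg_zero, exp_zero, mul_one]
    rw [hconst, integral_undef hint, neg_zero, exp_zero, one_mul]
    linarith [add_one_le_exp (-∫ s in Ioc a b, g s)]

theorem exp_neg_mul_one_sub_exp_neg_le_of_le {c C l Δ : ℝ} (hc : c ≤ C) (hl : l ≤ Δ)
    (hΔ : 0 ≤ Δ) : exp (-C) * (1 - exp (-l)) ≤ exp (-c) * (1 - exp (-Δ)) := by
  have : exp (-Δ) ≤ 1 := exp_le_one_iff.mpr (by linarith)
  calc exp (-C) * (1 - exp (-l)) ≤ exp (-C) * (1 - exp (-Δ)) := by gcongr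
    _ ≤ exp (-c) * (1 - exp (-Δ)) := by gcongr

theorem strong_aperiodicity_bound_general
    (B : ℝ → ℝ) (hBc : Continuous B) (hBnn : ∀ x, 0 ≤ B x)
    (r L l emin emax : ℝ) (hr : 0 < r)
    (hemin : 0 < emin) (he : emin ≤ emax)
    (hintL : ∫ s in Set.Ioc (0 : ℝ) (r / 2), B (2 * s) / s ≤ L)
    (hintl : l ≤ ∫ s in Set.Ioc (r / 2) r, B (2 * s) / s) :
    emin / emax * Real.exp (-(L / emin)) * (1 - Real.exp (-(l / emin)))
      ≤ ∫ y in Set.Ioc (r / 2) r,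
          B (2 * y) / (emax * y) *
            Real.exp (-(∫ s in Set.Ioc (0 : ℝ) y, B (2 * s) / (emin * s))) := by
  set g : ℝ → ℝ := fun s => B (2 * s) / (emin * s)
  have hg : ∀ s, g s = emin⁻¹ * (B (2 * s) / s) := fun s => by ring
  have hgc : ContinuousOn g (Icc (r / 2) r) := by
    refine (hBc.comp (continuous_const_mul 2)).continuousOn.div (by fun_prop) fun s hs => ?_
    have : 0 < s := by linarith [hs.1]
    positivity
  have hc : ∫ s in Ioc 0 (r / 2), g s ≤ L / emin := by
    simp_rw [hg, integral_const_mul, inv_mul_eq_div]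
    gcongr
  have hΔ : l / emin ≤ ∫ s in Ioc (r / 2) r, g s := by
    simp_rw [hg, integral_const_mul, inv_mul_eq_div]
    gcongr
  have hΔ₀ : 0 ≤ ∫ s in Ioc (r / 2) r, g s := setIntegral_nonneg measurableSet_Ioc fun s hs => by
    have : 0 < s := by linarith [hs.1]
    have := hBnn (2 * s)
    positivity
  have hrescale : ∀ y E, B (2 * y) / (emax * y) * E = emin / emax * (g y * E) := fun y E => by
    simp only [g]; field_simp
  simp_rw [hrescale, integral_const_mul, mul_assoc]
  gcongr
  · exact div_nonneg hemin.le (hemin.le.trans he)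
  exact (exp_neg_mul_one_sub_exp_neg_le_of_le hc hΔ hΔ₀).trans
    (exp_neg_mul_one_sub_exp_neg_le_setIntegral_mul_exp_neg (by linarith) (by linarith) hgc)

/-- Strong aperiodicity bound: mass of the minorising density on the small set. -/
theorem strong_aperiodicity_bound
    (B : ℝ → ℝ) (hBc : Continuous B) (hBnn : ∀ x, 0 ≤ B x)
    (r L l emin emax : ℝ) (hr : 0 < r) (hL : 0 < L) (hl : 0 < l)
    (hemin : 0 < emin) (he : emin ≤ emax)
    (hintL : ∫ s in Set.Ioc (0 : ℝ) (r / 2), B (2 * s) / s ≤ L)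
    (hintl : l ≤ ∫ s in Set.Ioc (r / 2) r, B (2 * s) / s) :
    emin / emax * Real.exp (-(L / emin)) * (1 - Real.exp (-(l / emin)))
      ≤ ∫ y in Set.Ioc (r / 2) r,
          B (2 * y) / (emax * y) *
            Real.exp (-(∫ s in Set.Ioc (0 : ℝ) y, B (2 * s) / (emin * s))) :=
  strong_aperiodicity_bound_general B hBc hBnn r L l emin emax hr hemin he hintL hintl
end

section
/- Fix 0 < γ < 1/2, h ∈ (0,1), and an integer N ≥ 0 with n = 2^N. Let k* = ⌊ |log h| / |log γ| ⌋. Then for each k ≤ N, 2^k Σ_{i=1}^k min(h, γ^i) ≤ 2^k (k* h + γ^{k*+1}/(1-γ)) ≤ C 2^k h (1 + |log h|) for a constant C depending only on γ, and hence Σ_{k=0}^N 2^k Σ_{i=1}^k min(h, γ^i) ≤ C' 2^N h (1 + |log h|). -/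
open Finset

/-- `k* = ⌊|log h| / |log γ|⌋`. -/
noncomputable def kstar (γ h : ℝ) : ℕ := ⌊|Real.log h| / |Real.log γ|⌋₊

/-!
Split `∑_{i=1}^k min(h, γ^i)` at `k* = ⌊|log h| / |log γ|⌋`: the first `k*` terms are at most `h`
each, and the remaining ones form a geometric tail starting at `γ^{k*+1} ≤ h`. Since
`k* ≤ |log h| / |log γ|`, both parts are `O(h (1 + |log h|))`, and summing against `2^k` over
`k ≤ N` costs only a factor `2 · 2^N`.
-/

lemma kstar_le (γ h : ℝ) : (kstar γ h : ℝ) ≤ |Real.log h| / |Real.log γ| :=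
  Nat.floor_le (by positivity)

lemma pow_kstar_succ_le {γ h : ℝ} (hγ0 : 0 < γ) (hγ1 : γ < 1) (hh : 0 < h) :
    γ ^ (kstar γ h + 1) ≤ h := by
  have hlogγ : Real.log γ < 0 := Real.log_neg hγ0 hγ1
  have hfloor : |Real.log h| / |Real.log γ| < (kstar γ h : ℝ) + 1 := Nat.lt_floor_add_one _
  rw [abs_of_neg hlogγ, div_lt_iff₀ (neg_pos.mpr hlogγ)] at hfloor
  have hlog : Real.log (γ ^ (kstar γ h + 1)) < Real.log h := by
    rw [Real.log_pow]
    push_cast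
    linarith [neg_abs_le (Real.log h)]
  exact ((Real.log_lt_log_iff (by positivity) hh).mp hlog).le

lemma sum_Icc_min_pow_le {γ h : ℝ} (hγ0 : 0 ≤ γ) (hγ1 : γ < 1) (hh : 0 ≤ h) (m k : ℕ) :
    ∑ i ∈ Icc 1 k, min h (γ ^ i) ≤ m * h + γ ^ (m + 1) / (1 - γ) := by
  rw [← sum_filter_add_sum_filter_not (Icc 1 k) (· ≤ m)]
  have head : ∑ i ∈ (Icc 1 k).filter (· ≤ m), min h (γ ^ i) ≤ m * h := by
    have hcard : #((Icc 1 k).filter (· ≤ m)) ≤ m := by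
      calc #((Icc 1 k).filter (· ≤ m)) ≤ #(Icc 1 m) :=
            card_le_card fun i hi => by simp only [mem_filter, mem_Icc] at hi ⊢; omega
        _ = m := by simp
    calc ∑ i ∈ (Icc 1 k).filter (· ≤ m), min h (γ ^ i)
        ≤ #((Icc 1 k).filter (· ≤ m)) • h := sum_le_card_nsmul _ _ _ fun i _ => min_le_left _ _
      _ ≤ m * h := by rw [nsmul_eq_mul]; gcongr
  have tail : ∑ i ∈ (Icc 1 k).filter (¬ · ≤ m), min h (γ ^ i) ≤ γ ^ (m + 1) / (1 - γ) :=
    calc ∑ i ∈ (Icc 1 k).filter (¬ · ≤ m), min h (γ ^ i)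
        ≤ ∑ i ∈ (Icc 1 k).filter (¬ · ≤ m), γ ^ i := sum_le_sum fun i _ => min_le_right _ _
      _ ≤ ∑ i ∈ Ico (m + 1) (k + 1), γ ^ i :=
          sum_le_sum_of_subset_of_nonneg
            (fun i hi => by simp only [mem_filter, mem_Icc, mem_Ico] at hi ⊢; omega)
            (fun i _ _ => pow_nonneg hγ0 i)
      _ ≤ γ ^ (m + 1) / (1 - γ) := geom_sum_Ico_le_of_lt_one hγ0 hγ1
  linarith

lemma kstar_mul_add_pow_div_le {γ h : ℝ} (hγ0 : 0 < γ) (hγ1 : γ < 1) (hh : 0 < h) :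
    (kstar γ h : ℝ) * h + γ ^ (kstar γ h + 1) / (1 - γ)
      ≤ (1 / |Real.log γ| + 1 / (1 - γ)) * h * (1 + |Real.log h|) := by
  have hγ' : 0 < 1 - γ := by linarith
  have hlogγ : 0 < |Real.log γ| := abs_pos.mpr (Real.log_neg hγ0 hγ1).ne
  have hk : (kstar γ h : ℝ) * h ≤ |Real.log h| / |Real.log γ| * h := by
    gcongr; exact kstar_le γ h
  have htail : γ ^ (kstar γ h + 1) / (1 - γ) ≤ h / (1 - γ) := by
    gcongr; exact pow_kstar_succ_le hγ0 hγ1 hh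
  have hrest : 0 ≤ h / |Real.log γ| + h * |Real.log h| / (1 - γ) := by positivity
  calc (kstar γ h : ℝ) * h + γ ^ (kstar γ h + 1) / (1 - γ)
      ≤ |Real.log h| / |Real.log γ| * h + h / (1 - γ) := add_le_add hk htail
    _ ≤ (1 / |Real.log γ| + 1 / (1 - γ)) * h * (1 + |Real.log h|) := by
      have hexpand : (1 / |Real.log γ| + 1 / (1 - γ)) * h * (1 + |Real.log h|)
          = |Real.log h| / |Real.log γ| * h + h / (1 - γ)
            + (h / |Real.log γ| + h * |Real.log h| / (1 - γ)) := by
        field_simp; ring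
      linarith

lemma sum_range_two_pow_mul_le {a : ℕ → ℝ} {B : ℝ} (ha : ∀ k, a k ≤ B) (hB : 0 ≤ B) (N : ℕ) :
    ∑ k ∈ range (N + 1), (2 : ℝ) ^ k * a k ≤ 2 * 2 ^ N * B :=
  calc ∑ k ∈ range (N + 1), (2 : ℝ) ^ k * a k
      ≤ ∑ k ∈ range (N + 1), (2 : ℝ) ^ k * B := sum_le_sum fun k _ => by gcongr; exact ha k
    _ = (2 ^ (N + 1) - 1) * B := by rw [← sum_mul, geom_sum_eq (by norm_num)]; norm_num
    _ ≤ 2 * 2 ^ N * B := by gcongr; rw [pow_succ]; linarith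

/-- Counting estimate in the variance bound for kernel estimation over the full binary
tree: for `0 < γ < 1/2`, there are constants depending only on `γ` such that for every
`h ∈ (0,1)` and every `N`, the sums `2^k Σ_{i=1}^k min(h, γ^i)` are controlled,
producing the logarithmic factor `1 + |log h|`. -/
theorem full_tree_min_sum_estimate (γ : ℝ) (hγ0 : 0 < γ) (hγ : γ < 1 / 2) :
    ∃ C C' : ℝ, 0 < C ∧ 0 < C' ∧
      ∀ h : ℝ, 0 < h → h < 1 → ∀ N : ℕ,
        (∀ k ≤ N,
          (2 : ℝ) ^ k * (∑ i ∈ Finset.Icc 1 k, min h (γ ^ i))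
            ≤ 2 ^ k * ((kstar γ h : ℝ) * h + γ ^ (kstar γ h + 1) / (1 - γ)) ∧
          (2 : ℝ) ^ k * ((kstar γ h : ℝ) * h + γ ^ (kstar γ h + 1) / (1 - γ))
            ≤ C * 2 ^ k * h * (1 + |Real.log h|)) ∧
        (∑ k ∈ Finset.range (N + 1),
            (2 : ℝ) ^ k * ∑ i ∈ Finset.Icc 1 k, min h (γ ^ i))
          ≤ C' * 2 ^ N * h * (1 + |Real.log h|) := by
  have hγ1 : γ < 1 := by linarith
  set C := 1 / |Real.log γ| + 1 / (1 - γ)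
  have hC : 0 < C := by
    have : 0 < 1 - γ := by linarith
    positivity
  refine ⟨C, 2 * C, hC, by positivity, fun h hh0 _ N => ?_⟩
  have hsplit (k : ℕ) := sum_Icc_min_pow_le hγ0.le hγ1 hh0.le (kstar γ h) k
  have hbound := kstar_mul_add_pow_div_le hγ0 hγ1 hh0
  refine ⟨fun k _ => ⟨by gcongr; exact hsplit k, ?_⟩, ?_⟩
  · calc (2 : ℝ) ^ k * ((kstar γ h : ℝ) * h + γ ^ (kstar γ h + 1) / (1 - γ))
        ≤ 2 ^ k * (C * h * (1 + |Real.log h|)) := by gcongr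
      _ = C * 2 ^ k * h * (1 + |Real.log h|) := by ring
  · calc ∑ k ∈ range (N + 1), (2 : ℝ) ^ k * ∑ i ∈ Icc 1 k, min h (γ ^ i)
        ≤ 2 * 2 ^ N * (C * h * (1 + |Real.log h|)) :=
          sum_range_two_pow_mul_le (fun k => (hsplit k).trans hbound) (by positivity) N
      _ = 2 * C * 2 ^ N * h * (1 + |Real.log h|) := by ring
end
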